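/- For the single-destination fluid problem, the threshold time τ* = inf{t ≥ 0 : φ(y(t)) ≤ 0}, where y(t) solves y' = Λy(1−y) with y(0)=Y₀ on the interval where φ(y(t))>0, with φ(y) = 1/(Λy²) − Γ, is given explicitly by: τ* = 0 if ΛΓ ≥ 1/Y₀², τ* = ∞ if ΛΓ ≤ 1, and otherwise τ* = (1/Λ)·log((1−Y₀)/(Y₀(√(ΛΓ)−1))). -/
import Mathlib


theorem single_destination_threshold_time
    (Λ Γ Y₀ : ℝ) (hΛ : 0 < Λ) (hΓ : 0 < Γ) (hY₀ : 0 < Y₀) (hY₀1 : Y₀ < 1) :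
    let y : ℝ → ℝ := fun t => Y₀ * Real.exp (Λ * t) / (1 - Y₀ + Y₀ * Real.exp (Λ * t))
    let φ : ℝ → ℝ := fun v => 1 / (Λ * v ^ 2) - Γ
    let S : Set ℝ := {t : ℝ | 0 ≤ t ∧ φ (y t) ≤ 0}
    (Λ * Γ ≥ 1 / Y₀ ^ 2 → sInf S = 0 ∧ S.Nonempty) ∧
    (Λ * Γ ≤ 1 → S = ∅) ∧
    (1 < Λ * Γ → Λ * Γ < 1 / Y₀ ^ 2 →
      sInf S = (1 / Λ) * Real.log ((1 - Y₀) / (Y₀ * (Real.sqrt (Λ * Γ) - 1)))) := by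
  intro y φ S
  have hs0 : 0 < Λ * Γ := mul_pos hΛ hΓ
  set s := Real.sqrt (Λ * Γ) with hs
  have hspos : 0 < s := Real.sqrt_pos.2 hs0
  have hssq : s ^ 2 = Λ * Γ := Real.sq_sqrt hs0.le
  have h1Y : 0 < 1 - Y₀ := by linarith
  -- membership characterization
  have hmem : ∀ t : ℝ, φ (y t) ≤ 0 ↔ 1 - Y₀ ≤ Y₀ * (s - 1) * Real.exp (Λ * t) := by
    intro t
    set E := Real.exp (Λ * t) with hE
    have hEpos : 0 < E := Real.exp_pos _
    have hD : 0 < 1 - Y₀ + Y₀ * E := by positivity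
    have hy : y t = Y₀ * E / (1 - Y₀ + Y₀ * E) := rfl
    have hypos : 0 < y t := by rw [hy]; positivity
    have hX : 0 < Λ * (y t) ^ 2 := by positivity
    have step1 : φ (y t) ≤ 0 ↔ 1 ≤ Γ * (Λ * (y t) ^ 2) := by
      simp only [φ, sub_nonpos]
      rw [div_le_iff₀ hX]
    rw [step1, hy, div_pow]
    have hD2 : 0 < (1 - Y₀ + Y₀ * E) ^ 2 := by positivity
    rw [show Γ * (Λ * ((Y₀ * E) ^ 2 / (1 - Y₀ + Y₀ * E) ^ 2))
        = (Λ * Γ * (Y₀ * E) ^ 2) / (1 - Y₀ + Y₀ * E) ^ 2 by ring]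
    rw [le_div_iff₀ hD2, one_mul]
    have hrw : Λ * Γ * (Y₀ * E) ^ 2 = (s * (Y₀ * E)) ^ 2 := by
      rw [show (s * (Y₀ * E)) ^ 2 = s ^ 2 * (Y₀ * E) ^ 2 by ring, hssq]
    rw [hrw]
    rw [pow_le_pow_iff_left₀ hD.le (by positivity) two_ne_zero]
    constructor <;> intro h <;> nlinarith
  refine ⟨?_, ?_, ?_⟩
  · -- Λ * Γ ≥ 1 / Y₀²
    intro h
    have hsY : 1 ≤ s * Y₀ := by
      have h1 : 1 ≤ Λ * Γ * Y₀ ^ 2 := by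
        rw [ge_iff_le, div_le_iff₀ (by positivity)] at h
        linarith
      nlinarith [mul_pos hspos hY₀]
    have h0 : (0 : ℝ) ∈ S := by
      refine ⟨le_refl 0, ?_⟩
      rw [hmem 0]
      simp only [mul_zero, Real.exp_zero, mul_one]
      nlinarith
    refine ⟨le_antisymm ?_ ?_, ⟨0, h0⟩⟩
    · exact csInf_le ⟨0, fun x hx => hx.1⟩ h0
    · exact le_csInf ⟨0, h0⟩ fun x hx => hx.1
  · -- Λ * Γ ≤ 1
    intro h
    have hs1 : s ≤ 1 := by
      rw [hs, show (1:ℝ) = Real.sqrt 1 by rw [Real.sqrt_one]]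
      exact Real.sqrt_le_sqrt h
    rw [Set.eq_empty_iff_forall_notMem]
    rintro t ⟨ht0, htφ⟩
    rw [hmem t] at htφ
    nlinarith [Real.exp_pos (Λ * t), mul_pos hY₀ (Real.exp_pos (Λ * t))]
  · -- 1 < Λ * Γ < 1 / Y₀²
    intro h1 h2
    have hs1 : 1 < s := by nlinarith
    have hsY : s * Y₀ < 1 := by
      have h2' : Λ * Γ * Y₀ ^ 2 < 1 := by
        rw [lt_div_iff₀ (by positivity)] at h2
        linarith
      nlinarith [mul_pos hspos hY₀]
    have hden : 0 < Y₀ * (s - 1) := by nlinarith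
    set A : ℝ := (1 - Y₀) / (Y₀ * (s - 1)) with hA
    have hApos : 0 < A := div_pos h1Y hden
    have hA1 : 1 < A := by
      rw [hA, lt_div_iff₀ hden]
      nlinarith
    have hlogA : 0 < Real.log A := Real.log_pos hA1
    have htstar : 0 < (1 / Λ) * Real.log A := by positivity
    have hSeq : S = Set.Ici ((1 / Λ) * Real.log A) := by
      ext t
      have key : (1 - Y₀ ≤ Y₀ * (s - 1) * Real.exp (Λ * t)) ↔ (1 / Λ) * Real.log A ≤ t := by
        rw [show Y₀ * (s - 1) * Real.exp (Λ * t) = Real.exp (Λ * t) * (Y₀ * (s - 1)) by ring]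
        rw [← div_le_iff₀ hden, ← hA]
        rw [← Real.log_le_iff_le_exp hApos]  -- careful: need A ≤ exp(Λt) ↔ log A ≤ Λt
        rw [div_mul_eq_mul_div, one_mul, div_le_iff₀ hΛ]
        constructor <;> intro hh <;> nlinarith
      simp only [S, Set.mem_setOf_eq, Set.mem_Ici, hmem t, key]
      constructor
      · exact fun hx => hx.2
      · exact fun hx => ⟨le_trans htstar.le hx, hx⟩
    rw [hSeq, csInf_Ici]
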